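/- For every integer r ≥ 5, the graph F_{2r} has 3r + 3 vertices and has no perfect matching, and every maximum matching M of F_{2r} saturates the three vertices x, y and z and leaves exactly r − 3 vertices unsaturated. -/

import Mathlib

/-!
The hubs `x, y, z` are pairwise non-adjacent and no edge joins two triangles, so every edge of a
matching contains a hub or lies inside a triangle, and a triangle contains at most one edge of a
matching. Hence a matching has at most `r + 3` edges, one fewer for every hub it misses. Matching
hub `k` into triangle `k`, the other two vertices of that triangle to each other, and two vertices
of every further triangle attains `r + 3`. As `2 (r + 3) < 3 r + 3`, no matching is perfect, and a
maximum one saturates the hubs and exposes `3 r + 3 - 2 (r + 3) = r - 3` vertices.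
-/

/-- A matching `M` of `G` is maximum if no matching of `G` has more edges. -/
def SimpleGraph.IsMaximumMatching {α : Type*} (G : SimpleGraph α) (M : G.Subgraph) : Prop :=
  M.IsMatching ∧ ∀ M' : G.Subgraph, M'.IsMatching → M'.edgeSet.ncard ≤ M.edgeSet.ncard

/-- The (underlying simple) graph `F_n` of the paper (used with `n = r`):
the vertices `x, y, z` are encoded as `Sum.inl 0, Sum.inl 1, Sum.inl 2`, the vertex
`v_{k+1}^{(i)}` is encoded as `Sum.inr (k, i)`; `x` is joined to every `v_1^{(i)}` and
`v_2^{(i)}`, `y` to every `v_1^{(i)}` and `v_3^{(i)}`, `z` to every `v_2^{(i)}` and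
`v_3^{(i)}` (i.e. `Sum.inl k` is joined to `Sum.inr (k', i)` iff `k + k' ≠ 2`), and
for each `i` the vertices `v_1^{(i)}, v_2^{(i)}, v_3^{(i)}` form a triangle. -/
def FGraph (n : ℕ) : SimpleGraph (Fin 3 ⊕ Fin 3 × Fin n) where
  Adj a b :=
    match a, b with
    | .inl k, .inr p => (k : ℕ) + (p.1 : ℕ) ≠ 2
    | .inr p, .inl k => (k : ℕ) + (p.1 : ℕ) ≠ 2
    | .inr p, .inr q => p.2 = q.2 ∧ p.1 ≠ q.1
    | _, _ => False
  symm := by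
    constructor
    rintro (k | p) (k' | q) h
    · exact h
    · exact h
    · exact h
    · exact ⟨h.1.symm, h.2.symm⟩
  loopless := by
    constructor
    rintro (k | p) h
    · exact h
    · exact h.2 rfl

namespace SimpleGraph.Subgraph

variable {V : Type*} {G : SimpleGraph V} {M : G.Subgraph}

theorem IsMatching.eq_of_mem_of_mem (hM : M.IsMatching) {e₁ e₂ : Sym2 V} {v : V}
    (he₁ : e₁ ∈ M.edgeSet) (he₂ : e₂ ∈ M.edgeSet) (hv₁ : v ∈ e₁) (hv₂ : v ∈ e₂) : e₁ = e₂ := by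
  obtain ⟨w₁, rfl⟩ := Sym2.mem_iff_exists.1 hv₁
  obtain ⟨w₂, rfl⟩ := Sym2.mem_iff_exists.1 hv₂
  exact congrArg _ (hM.eq_of_adj_left he₁ he₂)

theorem IsMatching.ncard_verts [Finite V] (hM : M.IsMatching) :
    M.verts.ncard = 2 * M.edgeSet.ncard := by
  classical
  have := Fintype.ofFinite V
  have hdeg (v : M.verts) : M.coe.degree v = 1 := by
    rw [coe_degree, degree_eq_one_iff_existsUnique_adj]
    exact hM v.2
  calc M.verts.ncard = ∑ v : M.verts, M.coe.degree v := by
        simp [hdeg, Set.ncard_eq_toFinset_card']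
    _ = 2 * M.coe.edgeFinset.card := by convert M.coe.sum_degrees_eq_twice_card_edges
    _ = 2 * M.edgeSet.ncard := by
        rw [← image_coe_edgeSet_coe,
          Set.ncard_image_of_injective _ (Sym2.map.injective Subtype.coe_injective),
          ← Set.ncard_coe_finset, coe_edgeFinset]

theorem IsMatching.setOf_forall_not_adj (hM : M.IsMatching) :
    {v | ∀ w, ¬ M.Adj v w} = M.vertsᶜ := by
  rw [← hM.support_eq_verts]
  ext v
  simp [mem_support]

def ofInvolutive (σ : V → V) (hσ : Function.Involutive σ) (hadj : ∀ v, σ v ≠ v → G.Adj v (σ v)) :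
    G.Subgraph where
  verts := {v | σ v ≠ v}
  Adj v w := σ v ≠ v ∧ σ v = w
  adj_sub := by
    rintro v _ ⟨hv, rfl⟩
    exact hadj v hv
  edge_vert h := h.1
  symm := ⟨by
    rintro v _ ⟨hv, rfl⟩
    exact ⟨by rwa [hσ v, ne_comm], hσ v⟩⟩

theorem isMatching_ofInvolutive (σ : V → V) (hσ : Function.Involutive σ)
    (hadj : ∀ v, σ v ≠ v → G.Adj v (σ v)) : (ofInvolutive σ hσ hadj).IsMatching :=
  fun v hv => ⟨σ v, ⟨hv, rfl⟩, fun _ h => h.2.symm⟩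

theorem compl_verts_ofInvolutive (σ : V → V) (hσ : Function.Involutive σ)
    (hadj : ∀ v, σ v ≠ v → G.Adj v (σ v)) :
    (ofInvolutive σ hσ hadj).vertsᶜ = Function.fixedPoints σ := by
  ext v
  simp [ofInvolutive, Function.IsFixedPt]

end SimpleGraph.Subgraph

theorem Fin.ncard_setOf_le_val (m r : ℕ) : {i : Fin r | m ≤ (i : ℕ)}.ncard = r - m := by
  rw [← Set.ncard_image_of_injective _ Fin.val_injective, ← Set.ncard_Ico_nat]
  congr
  ext n
  exact ⟨fun ⟨i, hi, hin⟩ => hin ▸ ⟨hi, i.2⟩, fun ⟨h₁, h₂⟩ => ⟨⟨n, h₂⟩, h₁, rfl⟩⟩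

namespace FGraph

open SimpleGraph

variable {r : ℕ}

/-- The hub (`Sum.inl`) an edge meets, or else the index of the triangle (`Sum.inr`) containing
it; the `min`s only make the definition symmetric and never matter on edges of `FGraph r`. -/
def edgeClass : Sym2 (Fin 3 ⊕ Fin 3 × Fin r) → Fin 3 ⊕ Fin r :=
  Sym2.lift ⟨fun a b => match a, b with
    | .inl k, .inl k' => .inl (min k k')
    | .inl k, .inr _ | .inr _, .inl k => .inl k
    | .inr p, .inr q => .inr (min p.2 q.2),
    by rintro (k | p) (k' | q) <;> simp [min_comm]⟩

theorem mem_of_edgeClass_eq_inl {e : Sym2 (Fin 3 ⊕ Fin 3 × Fin r)} (he : e ∈ (FGraph r).edgeSet)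
    {k : Fin 3} (h : edgeClass e = .inl k) : .inl k ∈ e := by
  induction e with | _ a b =>
  rcases a with k₁ | p <;> rcases b with k₂ | q <;> simp_all [edgeClass, FGraph]

theorem exists_of_edgeClass_eq_inr {e : Sym2 (Fin 3 ⊕ Fin 3 × Fin r)}
    (he : e ∈ (FGraph r).edgeSet) {i : Fin r} (h : edgeClass e = .inr i) :
    ∃ t t', t ≠ t' ∧ e = s(.inr (t, i), .inr (t', i)) := by
  induction e with | _ a b =>
  rcases a with k₁ | ⟨t, j⟩ <;> rcases b with k₂ | ⟨t', j'⟩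
  · exact he.elim
  · simp [edgeClass] at h
  · simp [edgeClass] at h
  · obtain ⟨rfl, hne⟩ := he
    obtain rfl : j = i := by simpa [edgeClass] using h
    exact ⟨t, t', hne, rfl⟩

theorem edgeClass_injOn {M : (FGraph r).Subgraph} (hM : M.IsMatching) :
    Set.InjOn edgeClass M.edgeSet := by
  intro e₁ he₁ e₂ he₂ h
  rcases hc : edgeClass e₁ with k | i
  · exact hM.eq_of_mem_of_mem he₁ he₂ (mem_of_edgeClass_eq_inl (M.edgeSet_subset he₁) hc)
      (mem_of_edgeClass_eq_inl (M.edgeSet_subset he₂) (h ▸ hc))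
  · obtain ⟨t₁, t₁', ht₁, rfl⟩ := exists_of_edgeClass_eq_inr (M.edgeSet_subset he₁) hc
    obtain ⟨t₂, t₂', ht₂, rfl⟩ := exists_of_edgeClass_eq_inr (M.edgeSet_subset he₂) (h ▸ hc)
    have two_edges_of_triangle_meet : ∀ a a' b b' : Fin 3, a ≠ a' → b ≠ b' →
        ∃ t, (t = a ∨ t = a') ∧ (t = b ∨ t = b') := by decide
    obtain ⟨t, h₁, h₂⟩ := two_edges_of_triangle_meet t₁ t₁' t₂ t₂' ht₁ ht₂
    exact hM.eq_of_mem_of_mem (v := .inr (t, i)) he₁ he₂ (by simpa using h₁) (by simpa using h₂)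

theorem ncard_edgeSet_add_ncard_unmatched_hubs_le {M : (FGraph r).Subgraph} (hM : M.IsMatching) :
    M.edgeSet.ncard + {k : Fin 3 | .inl k ∉ M.verts}.ncard ≤ r + 3 := by
  set U := {k : Fin 3 | Sum.inl k ∉ M.verts}
  have hsub : edgeClass '' M.edgeSet ⊆ (Sum.inl '' U)ᶜ := by
    rintro _ ⟨e, he, rfl⟩ ⟨k, hk, hek⟩
    exact hk (M.mem_verts_of_mem_edge he (mem_of_edgeClass_eq_inl (M.edgeSet_subset he) hek.symm))
  calc M.edgeSet.ncard + U.ncard = (edgeClass '' M.edgeSet).ncard + (Sum.inl '' U).ncard := by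
        rw [(edgeClass_injOn hM).ncard_image,
          Set.ncard_image_of_injective _ (Sum.inl_injective (β := Fin r))]
    _ ≤ (Sum.inl '' U)ᶜ.ncard + (Sum.inl '' U).ncard :=
        Nat.add_le_add_right (Set.ncard_le_ncard hsub) _
    _ = r + 3 := by
        rw [add_comm, Set.ncard_add_ncard_compl]
        simp [add_comm]

theorem val_add_val_neg_ne_two : ∀ k : Fin 3, (k : ℕ) + ((-k : Fin 3) : ℕ) ≠ 2 := by decide

/-- The vertex of triangle `i` not paired inside the triangle: it is matched to hub `i` if `i < 3`
and left exposed otherwise. -/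
def reserved (i : Fin r) : Fin 3 := if h : (i : ℕ) < 3 then -⟨i, h⟩ else 2

theorem reserved_castLE (hr : 3 ≤ r) (k : Fin 3) : reserved (Fin.castLE hr k) = -k := by
  simp [reserved]

/-- For distinct `t` and `ρ`, the remaining element of `Fin 3`. -/
def third (t ρ : Fin 3) : Fin 3 := -(t + ρ)

theorem third_ne_left : ∀ t ρ : Fin 3, t ≠ ρ → third t ρ ≠ t := by decide

theorem third_ne_right : ∀ t ρ : Fin 3, t ≠ ρ → third t ρ ≠ ρ := by decide

theorem third_third (t ρ : Fin 3) : third (third t ρ) ρ = t := by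
  simp [third]

def mate (hr : 3 ≤ r) : Fin 3 ⊕ Fin 3 × Fin r → Fin 3 ⊕ Fin 3 × Fin r
  | .inl k => .inr (-k, Fin.castLE hr k)
  | .inr (t, i) =>
    if t ≠ reserved i then .inr (third t (reserved i), i)
    else if h : (i : ℕ) < 3 then .inl ⟨i, h⟩ else .inr (t, i)

theorem mate_involutive (hr : 3 ≤ r) : Function.Involutive (mate hr) := by
  rintro (k | ⟨t, i⟩)
  · simp [mate, reserved_castLE]
  · by_cases ht : t = reserved i
    · by_cases hi : (i : ℕ) < 3
      · simp [mate, ht, hi, reserved]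
      · simp [mate, ht, hi]
    · simp [mate, ht, third_ne_right t _ ht, third_third]

theorem mate_adj (hr : 3 ≤ r) (v : Fin 3 ⊕ Fin 3 × Fin r) (hv : mate hr v ≠ v) :
    (FGraph r).Adj v (mate hr v) := by
  rcases v with k | ⟨t, i⟩
  · exact val_add_val_neg_ne_two k
  · by_cases ht : t = reserved i
    · by_cases hi : (i : ℕ) < 3
      · simpa [mate, ht, hi, reserved, FGraph] using val_add_val_neg_ne_two ⟨i, hi⟩
      · simp [mate, ht, hi] at hv
    · simpa [mate, ht, FGraph] using (third_ne_left t _ ht).symm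

theorem fixedPoints_mate_subset (hr : 3 ≤ r) :
    Function.fixedPoints (mate hr) ⊆ (fun i => .inr (2, i)) '' {i : Fin r | 3 ≤ (i : ℕ)} := by
  rintro (k | ⟨t, i⟩) h
  · simp [Function.IsFixedPt, mate] at h
  · by_cases ht : t = reserved i
    · by_cases hi : (i : ℕ) < 3
      · simp [Function.IsFixedPt, mate, ht, hi] at h
      · exact ⟨i, not_lt.1 hi, by simp [ht, hi, reserved]⟩
    · simp [Function.IsFixedPt, mate, ht, third_ne_left t _ ht] at h

theorem exists_isMatching_ncard_compl_verts_le (hr : 3 ≤ r) :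
    ∃ M : (FGraph r).Subgraph, M.IsMatching ∧ M.vertsᶜ.ncard ≤ r - 3 := by
  refine ⟨.ofInvolutive _ (mate_involutive hr) (mate_adj hr),
    Subgraph.isMatching_ofInvolutive .., ?_⟩
  rw [Subgraph.compl_verts_ofInvolutive, ← Fin.ncard_setOf_le_val]
  exact (Set.ncard_le_ncard (fixedPoints_mate_subset hr)).trans Set.ncard_image_le

end FGraph

/-- `F_{2r}` has `3r + 3` vertices, has no perfect matching, and every maximum matching
saturates `x`, `y` and `z` and leaves exactly `r - 3` vertices unsaturated. -/
theorem stmt_13 (r : ℕ) (hr : 5 ≤ r) :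
    Fintype.card (Fin 3 ⊕ Fin 3 × Fin r) = 3 * r + 3 ∧
    (¬ ∃ M : (FGraph r).Subgraph, M.IsPerfectMatching) ∧
    (∀ M : (FGraph r).Subgraph, (FGraph r).IsMaximumMatching M →
      (∀ k : Fin 3, ∃ b, M.Adj (Sum.inl k) b) ∧
      {a : Fin 3 ⊕ Fin 3 × Fin r | ∀ b, ¬ M.Adj a b}.ncard = r - 3) := by
  have hcard : Fintype.card (Fin 3 ⊕ Fin 3 × Fin r) = 3 * r + 3 := by simp; ring
  have hcount (M : (FGraph r).Subgraph) (hM : M.IsMatching) :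
      M.vertsᶜ.ncard + 2 * M.edgeSet.ncard = 3 * r + 3 := by
    rw [← hM.ncard_verts, add_comm, Set.ncard_add_ncard_compl, Nat.card_eq_fintype_card, hcard]
  refine ⟨hcard, ?_, ?_⟩
  · rintro ⟨M, hM, hspan⟩
    have hM_count := hcount M hM
    rw [hspan.verts_eq_univ, Set.compl_univ, Set.ncard_empty] at hM_count
    have hbound := FGraph.ncard_edgeSet_add_ncard_unmatched_hubs_le hM
    omega
  · rintro M ⟨hM, hmax⟩
    obtain ⟨M₀, hM₀, hM₀_exposed⟩ :=
      FGraph.exists_isMatching_ncard_compl_verts_le (r := r) (by omega)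
    have hle := hmax M₀ hM₀
    have hM_count := hcount M hM
    have hM₀_count := hcount M₀ hM₀
    have hbound := FGraph.ncard_edgeSet_add_ncard_unmatched_hubs_le hM
    have hhubs : {k : Fin 3 | .inl k ∉ M.verts} = ∅ :=
      (Set.ncard_eq_zero (Set.toFinite _)).1 (by omega)
    refine ⟨fun k => (hM ?_).exists, ?_⟩
    · simpa using Set.eq_empty_iff_forall_notMem.1 hhubs k
    · rw [hM.setOf_forall_not_adj]
      omega
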